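/- arXiv:1804.10554 — 5 statements merged into one kernel-verified Lean document; each statement's English description precedes it below -/
import Mathlib

section
/- For any two row-stochastic matrices A_1, A_2 ∈ R^{N×N}, the ergodic coefficient of their product satisfies λ(A_1 A_2) ≤ λ(A_1) λ(A_2). -/
def RowStochastic {N : ℕ} (A : Matrix (Fin N) (Fin N) ℝ) : Prop :=
  (∀ i j, 0 ≤ A i j) ∧ ∀ i, ∑ j, A i j = 1

noncomputable def ergodicCoeff {N : ℕ} (A : Matrix (Fin N) (Fin N) ℝ) : ℝ :=
  1 - ⨅ p : {p : Fin N × Fin N // p.1 ≠ p.2}, ∑ k, min (A p.1.1 k) (A p.1.2 k)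

private lemma min_eq_half (a b : ℝ) : min a b = (a + b - |a - b|) / 2 := by
  rcases le_total a b with h|h
  · rw [min_eq_left h, abs_of_nonpos (by linarith)]; ring
  · rw [min_eq_right h, abs_of_nonneg (by linarith)]; ring

/-- For stochastic rows, the sum of minima in terms of the L¹ distance. -/
private lemma sum_min_eq {N : ℕ} (u v : Fin N → ℝ) (hu : ∑ k, u k = 1) (hv : ∑ k, v k = 1) :
    ∑ k, min (u k) (v k) = 1 - (∑ k, |u k - v k|) / 2 := by
  have h : ∑ k, min (u k) (v k) = ∑ k, ((u k + v k) / 2 - |u k - v k| / 2) :=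
    Finset.sum_congr rfl fun k _ => by rw [min_eq_half]; ring
  rw [h, Finset.sum_sub_distrib]
  have h2 : ∑ k, (u k + v k) / 2 = 1 := by
    rw [← Finset.sum_div, Finset.sum_add_distrib, hu, hv]; norm_num
  rw [h2, ← Finset.sum_div]

private lemma bddBelow_min {N : ℕ} (A : Matrix (Fin N) (Fin N) ℝ) (hA : RowStochastic A) :
    BddBelow (Set.range fun p : {p : Fin N × Fin N // p.1 ≠ p.2} =>
      ∑ k, min (A p.1.1 k) (A p.1.2 k)) := by
  refine ⟨0, fun x hx => ?_⟩
  obtain ⟨p, rfl⟩ := hx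
  exact Finset.sum_nonneg fun k _ => le_min (hA.1 _ _) (hA.1 _ _)

/-- Per-pair L¹ bound from the ergodic coefficient. -/
private lemma sum_abs_le {N : ℕ} (A : Matrix (Fin N) (Fin N) ℝ) (hA : RowStochastic A)
    {i j : Fin N} (hij : i ≠ j) :
    ∑ k, |A i k - A j k| ≤ 2 * ergodicCoeff A := by
  have h1 : (⨅ p : {p : Fin N × Fin N // p.1 ≠ p.2}, ∑ k, min (A p.1.1 k) (A p.1.2 k))
      ≤ ∑ k, min (A i k) (A j k) := ciInf_le (bddBelow_min A hA) ⟨(i, j), hij⟩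
  have h2 : ∑ k, min (A i k) (A j k) = 1 - (∑ k, |A i k - A j k|) / 2 :=
    sum_min_eq _ _ (hA.2 i) (hA.2 j)
  unfold ergodicCoeff
  linarith

private lemma ergodicCoeff_nonneg {N : ℕ} (A : Matrix (Fin N) (Fin N) ℝ) (hA : RowStochastic A)
    (hne : Nonempty {p : Fin N × Fin N // p.1 ≠ p.2}) : 0 ≤ ergodicCoeff A := by
  obtain ⟨p⟩ := hne
  have h1 : (⨅ p : {p : Fin N × Fin N // p.1 ≠ p.2}, ∑ k, min (A p.1.1 k) (A p.1.2 k))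
      ≤ ∑ k, min (A p.1.1 k) (A p.1.2 k) := ciInf_le (bddBelow_min A hA) p
  have h2 : ∑ k, min (A p.1.1 k) (A p.1.2 k) ≤ ∑ k, A p.1.1 k :=
    Finset.sum_le_sum fun k _ => min_le_left _ _
  have h3 := hA.2 p.1.1
  unfold ergodicCoeff
  linarith

/-- Contraction of a mean-zero vector by a row-stochastic matrix whose rows are
pairwise within `2*c` in L¹. -/
private lemma contraction {N : ℕ} (A : Matrix (Fin N) (Fin N) ℝ)
    (c : ℝ) (hc : 0 ≤ c)
    (hcb : ∀ i j : Fin N, ∑ k, |A i k - A j k| ≤ 2 * c)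
    (x : Fin N → ℝ) (hx : ∑ i, x i = 0) :
    ∑ k, |∑ i, x i * A i k| ≤ c * ∑ i, |x i| := by
  set p : Fin N → ℝ := fun i => max (x i) 0 with hp
  set q : Fin N → ℝ := fun i => max (-(x i)) 0 with hq
  have hpq : ∀ i, x i = p i - q i := by
    intro i; simp only [hp, hq]
    rcases le_total (x i) 0 with h|h
    · rw [max_eq_right h, max_eq_left (by linarith)]; ring
    · rw [max_eq_left h, max_eq_right (by linarith)]; ring
  have habs : ∀ i, |x i| = p i + q i := by
    intro i; simp only [hp, hq]
    rcases le_total (x i) 0 with h|h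
    · rw [abs_of_nonpos h, max_eq_right h, max_eq_left (by linarith)]; ring
    · rw [abs_of_nonneg h, max_eq_left h, max_eq_right (by linarith)]; ring
  have hp0 : ∀ i, 0 ≤ p i := fun i => le_max_right _ _
  have hq0 : ∀ i, 0 ≤ q i := fun i => le_max_right _ _
  set s : ℝ := ∑ i, p i with hs
  have hqs : ∑ i, q i = s := by
    have : ∑ i, (p i - q i) = 0 := by
      rw [← hx]; exact Finset.sum_congr rfl fun i _ => (hpq i).symm
    rw [Finset.sum_sub_distrib] at this
    linarith
  have habs_sum : ∑ i, |x i| = 2 * s := by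
    calc ∑ i, |x i| = ∑ i, (p i + q i) := Finset.sum_congr rfl fun i _ => habs i
    _ = s + ∑ i, q i := by rw [Finset.sum_add_distrib]
    _ = 2 * s := by rw [hqs]; ring
  rcases eq_or_lt_of_le (Finset.sum_nonneg fun i _ => hp0 i : (0:ℝ) ≤ s) with hs0 | hs0
  · -- s = 0 : x = 0
    have hpz : ∀ i ∈ Finset.univ, p i = 0 := by
      intro i _
      exact le_antisymm (by
        have := Finset.single_le_sum (fun i _ => hp0 i) (Finset.mem_univ i)
        linarith) (hp0 i)
    have hqz : ∀ i ∈ Finset.univ, q i = 0 := by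
      intro i _
      have hqsum : (0:ℝ) ≤ ∑ i, q i := Finset.sum_nonneg fun i _ => hq0 i
      exact le_antisymm (by
        have := Finset.single_le_sum (fun i _ => hq0 i) (Finset.mem_univ i)
        rw [hqs] at this
        linarith) (hq0 i)
    have hxz : ∀ i, x i = 0 := fun i => by
      rw [hpq i, hpz i (Finset.mem_univ i), hqz i (Finset.mem_univ i)]; ring
    have : ∑ k, |∑ i, x i * A i k| = 0 := by
      apply Finset.sum_eq_zero; intro k _
      have : ∑ i, x i * A i k = 0 := Finset.sum_eq_zero fun i _ => by rw [hxz i]; ring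
      rw [this, abs_zero]
    rw [this, habs_sum, hs, ← hs0]
    simp
  · -- s > 0
    have key : ∀ k, s * (∑ i, x i * A i k) = ∑ i, ∑ j, p i * q j * (A i k - A j k) := by
      intro k
      have h1a : (∑ i, p i * A i k) * (∑ j, q j) = ∑ i, ∑ j, p i * A i k * q j := by
        rw [Finset.sum_mul]
        exact Finset.sum_congr rfl fun i _ => by rw [Finset.mul_sum]
      have h1b : (∑ i, p i) * (∑ j, q j * A j k) = ∑ i, ∑ j, p i * (q j * A j k) := by
        rw [Finset.sum_mul]
        exact Finset.sum_congr rfl fun i _ => by rw [Finset.mul_sum]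
      have h1 : ∑ i, ∑ j, p i * q j * (A i k - A j k)
          = (∑ i, p i * A i k) * (∑ j, q j) - (∑ i, p i) * (∑ j, q j * A j k) := by
        rw [h1a, h1b, ← Finset.sum_sub_distrib]
        apply Finset.sum_congr rfl; intro i _
        rw [← Finset.sum_sub_distrib]
        apply Finset.sum_congr rfl; intro j _
        ring
      have h2 : ∑ i, x i * A i k = (∑ i, p i * A i k) - (∑ i, q i * A i k) := by
        rw [← Finset.sum_sub_distrib]
        exact Finset.sum_congr rfl fun i _ => by rw [hpq i]; ring
      rw [h1, hqs, ← hs, h2]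
      ring
    have main : s * (∑ k, |∑ i, x i * A i k|) ≤ s * (2 * c * s) := by
      calc s * (∑ k, |∑ i, x i * A i k|) = ∑ k, |s * (∑ i, x i * A i k)| := by
            rw [Finset.mul_sum]
            apply Finset.sum_congr rfl; intro k _
            rw [abs_mul, abs_of_nonneg hs0.le]
        _ = ∑ k, |∑ i, ∑ j, p i * q j * (A i k - A j k)| := by
            apply Finset.sum_congr rfl; intro k _; rw [key k]
        _ ≤ ∑ k, ∑ i, ∑ j, p i * q j * |A i k - A j k| := by
            apply Finset.sum_le_sum; intro k _
            calc |∑ i, ∑ j, p i * q j * (A i k - A j k)|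
                ≤ ∑ i, |∑ j, p i * q j * (A i k - A j k)| := Finset.abs_sum_le_sum_abs _ _
              _ ≤ ∑ i, ∑ j, p i * q j * |A i k - A j k| := by
                  apply Finset.sum_le_sum; intro i _
                  calc |∑ j, p i * q j * (A i k - A j k)|
                      ≤ ∑ j, |p i * q j * (A i k - A j k)| := Finset.abs_sum_le_sum_abs _ _
                    _ = ∑ j, p i * q j * |A i k - A j k| := by
                        apply Finset.sum_congr rfl; intro j _
                        rw [abs_mul, abs_mul, abs_of_nonneg (hp0 i), abs_of_nonneg (hq0 j)]
        _ = ∑ i, ∑ j, p i * q j * (∑ k, |A i k - A j k|) := by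
            rw [Finset.sum_comm]
            apply Finset.sum_congr rfl; intro i _
            rw [Finset.sum_comm]
            apply Finset.sum_congr rfl; intro j _
            rw [Finset.mul_sum]
        _ ≤ ∑ i, ∑ j, p i * q j * (2 * c) := by
            apply Finset.sum_le_sum; intro i _
            apply Finset.sum_le_sum; intro j _
            exact mul_le_mul_of_nonneg_left (hcb i j) (mul_nonneg (hp0 i) (hq0 j))
        _ = s * (2 * c * s) := by
            have h3 : (∑ i, p i) * (∑ j, q j) * (2 * c) = ∑ i, ∑ j, p i * q j * (2 * c) := by
              rw [Finset.sum_mul_sum, Finset.sum_mul]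
              exact Finset.sum_congr rfl fun i _ => by rw [Finset.sum_mul]
            rw [← h3, hqs, ← hs]; ring
    have := le_of_mul_le_mul_left main hs0
    rw [habs_sum]
    linarith

/-- Submultiplicativity of the ergodic coefficient. -/
theorem ergodicCoeff_mul_le {N : ℕ} (A₁ A₂ : Matrix (Fin N) (Fin N) ℝ)
    (h1 : RowStochastic A₁) (h2 : RowStochastic A₂) :
    ergodicCoeff (A₁ * A₂) ≤ ergodicCoeff A₁ * ergodicCoeff A₂ := by
  by_cases hN : Nonempty {p : Fin N × Fin N // p.1 ≠ p.2}
  · -- nonempty case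
    have hP : RowStochastic (A₁ * A₂) := by
      constructor
      · intro i j
        simp only [Matrix.mul_apply]
        exact Finset.sum_nonneg fun l _ => mul_nonneg (h1.1 _ _) (h2.1 _ _)
      · intro i
        simp only [Matrix.mul_apply]
        rw [Finset.sum_comm]
        calc ∑ l, ∑ k, A₁ i l * A₂ l k = ∑ l, A₁ i l * ∑ k, A₂ l k := by
              apply Finset.sum_congr rfl; intro l _; rw [Finset.mul_sum]
          _ = 1 := by
              rw [show (fun l => A₁ i l * ∑ k, A₂ l k) = fun l => A₁ i l from
                funext fun l => by rw [h2.2 l, mul_one]]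
              exact h1.2 i
    have hL1 : 0 ≤ ergodicCoeff A₁ := ergodicCoeff_nonneg A₁ h1 hN
    have hL2 : 0 ≤ ergodicCoeff A₂ := ergodicCoeff_nonneg A₂ h2 hN
    have hcb : ∀ i j : Fin N, ∑ k, |A₂ i k - A₂ j k| ≤ 2 * ergodicCoeff A₂ := by
      intro i j
      by_cases hij : i = j
      · subst hij; simp [hL2]
      · exact sum_abs_le A₂ h2 hij
    -- key bound per pair
    have hkey : ∀ p : {p : Fin N × Fin N // p.1 ≠ p.2},
        1 - ergodicCoeff A₁ * ergodicCoeff A₂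
          ≤ ∑ k, min ((A₁ * A₂) p.1.1 k) ((A₁ * A₂) p.1.2 k) := by
      intro ⟨⟨i, j⟩, hij⟩
      have hmin : ∑ k, min ((A₁ * A₂) i k) ((A₁ * A₂) j k)
          = 1 - (∑ k, |(A₁ * A₂) i k - (A₁ * A₂) j k|) / 2 :=
        sum_min_eq _ _ (hP.2 i) (hP.2 j)
      set x : Fin N → ℝ := fun l => A₁ i l - A₁ j l with hxdef
      have hxsum : ∑ l, x l = 0 := by
        simp only [hxdef]
        rw [Finset.sum_sub_distrib, h1.2 i, h1.2 j]; ring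
      have hdiff : ∀ k, (A₁ * A₂) i k - (A₁ * A₂) j k = ∑ l, x l * A₂ l k := by
        intro k
        simp only [Matrix.mul_apply, hxdef]
        rw [← Finset.sum_sub_distrib]
        apply Finset.sum_congr rfl; intro l _; ring
      have hcontr : ∑ k, |∑ l, x l * A₂ l k| ≤ ergodicCoeff A₂ * ∑ l, |x l| :=
        contraction A₂ (ergodicCoeff A₂) hL2 hcb x hxsum
      have hx1 : ∑ l, |x l| ≤ 2 * ergodicCoeff A₁ := sum_abs_le A₁ h1 hij
      have : ∑ k, |(A₁ * A₂) i k - (A₁ * A₂) j k| ≤ 2 * (ergodicCoeff A₁ * ergodicCoeff A₂) := by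
        calc ∑ k, |(A₁ * A₂) i k - (A₁ * A₂) j k| = ∑ k, |∑ l, x l * A₂ l k| := by
              apply Finset.sum_congr rfl; intro k _; rw [hdiff k]
          _ ≤ ergodicCoeff A₂ * ∑ l, |x l| := hcontr
          _ ≤ ergodicCoeff A₂ * (2 * ergodicCoeff A₁) := by
              exact mul_le_mul_of_nonneg_left hx1 hL2
          _ = 2 * (ergodicCoeff A₁ * ergodicCoeff A₂) := by ring
      rw [hmin]
      linarith
    have hinf : 1 - ergodicCoeff A₁ * ergodicCoeff A₂
        ≤ ⨅ p : {p : Fin N × Fin N // p.1 ≠ p.2},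
          ∑ k, min ((A₁ * A₂) p.1.1 k) ((A₁ * A₂) p.1.2 k) := le_ciInf hkey
    have hrfl : ergodicCoeff (A₁ * A₂) = 1 - ⨅ p : {p : Fin N × Fin N // p.1 ≠ p.2},
        ∑ k, min ((A₁ * A₂) p.1.1 k) ((A₁ * A₂) p.1.2 k) := rfl
    rw [hrfl]
    linarith
  · -- empty case : both coefficients are 1
    have hE : IsEmpty {p : Fin N × Fin N // p.1 ≠ p.2} := not_nonempty_iff.mp hN
    unfold ergodicCoeff
    rw [Real.iInf_of_isEmpty, Real.iInf_of_isEmpty, Real.iInf_of_isEmpty]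
    norm_num
end

section
/- For any row-stochastic matrix A ∈ R^{N×N} and any vector x ∈ R^N, the maximal discrepancy satisfies Δ(Ax) ≤ λ(A) Δ(x), where Δ(x) = max_i x_i - min_i x_i and λ is the ergodic coefficient. -/
noncomputable def disc {N : ℕ} (x : Fin N → ℝ) : ℝ := (⨆ i, x i) - ⨅ i, x i

/-- The discrepancy contracts under a stochastic matrix by the ergodic coefficient. -/
theorem disc_mulVec_le {N : ℕ} (A : Matrix (Fin N) (Fin N) ℝ)
    (hA : RowStochastic A) (x : Fin N → ℝ) :
    disc (A.mulVec x) ≤ ergodicCoeff A * disc x := by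
  obtain ⟨hpos, hsum⟩ := hA
  match N, A, hpos, hsum, x with
  | 0, A, hpos, hsum, x =>
    simp [disc, Real.iSup_of_isEmpty, Real.iInf_of_isEmpty, ergodicCoeff]
  | 1, A, hpos, hsum, x =>
    have hie : IsEmpty {p : Fin 1 × Fin 1 // p.1 ≠ p.2} :=
      ⟨fun p => p.2 (Subsingleton.elim _ _)⟩
    have h1 : ∀ f : Fin 1 → ℝ, disc f = 0 := by
      intro f; simp [disc, ciSup_unique, ciInf_unique]
    rw [h1, h1]
    simp
  | (n+2), A, hpos, hsum, x =>
    set M := ⨆ i, x i with hM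
    set mn := ⨅ i, x i with hmn
    have hbA : BddAbove (Set.range x) := Set.Finite.bddAbove (Set.finite_range x)
    have hbB : BddBelow (Set.range x) := Set.Finite.bddBelow (Set.finite_range x)
    have hxM : ∀ k, x k ≤ M := fun k => le_ciSup hbA k
    have hmx : ∀ k, mn ≤ x k := fun k => ciInf_le hbB k
    have hdisc : (0:ℝ) ≤ disc x := by
      have := hxM 0; have := hmx 0
      simp only [disc, ← hM, ← hmn]; linarith
    -- ergodic coeff nonneg
    have hne : Nonempty {p : Fin (n+2) × Fin (n+2) // p.1 ≠ p.2} :=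
      ⟨⟨(0, 1), by simp [Fin.ext_iff]⟩⟩
    have hSle1 : ∀ i j : Fin (n+2), ∑ k, min (A i k) (A j k) ≤ 1 := by
      intro i j
      calc ∑ k, min (A i k) (A j k) ≤ ∑ k, A i k :=
            Finset.sum_le_sum (fun k _ => min_le_left _ _)
        _ = 1 := hsum i
    have hbI : BddBelow (Set.range fun p : {p : Fin (n+2) × Fin (n+2) // p.1 ≠ p.2} =>
        ∑ k, min (A p.1.1 k) (A p.1.2 k)) :=
      Set.Finite.bddBelow (Set.finite_range _)
    have hlam0 : 0 ≤ ergodicCoeff A := by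
      have : (⨅ p : {p : Fin (n+2) × Fin (n+2) // p.1 ≠ p.2},
          ∑ k, min (A p.1.1 k) (A p.1.2 k)) ≤ 1 := by
        obtain ⟨p⟩ := hne
        exact le_trans (ciInf_le hbI p) (hSle1 _ _)
      simp only [ergodicCoeff]; linarith
    -- key pairwise bound
    have key : ∀ i j : Fin (n+2),
        A.mulVec x i - A.mulVec x j ≤ ergodicCoeff A * disc x := by
      intro i j
      by_cases hij : i = j
      · subst hij; simpa using mul_nonneg hlam0 hdisc
      · set m : Fin (n+2) → ℝ := fun k => min (A i k) (A j k) with hm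
        have hmnn : ∀ k, 0 ≤ m k := fun k => le_min (hpos i k) (hpos j k)
        have hSle : 1 - ∑ k, m k ≤ ergodicCoeff A := by
          simp only [ergodicCoeff]
          have := ciInf_le hbI ⟨(i, j), hij⟩
          simp only at this
          linarith
        have hS1 : ∑ k, m k ≤ 1 := hSle1 i j
        have hmv : ∀ i', A.mulVec x i' = ∑ k, A i' k * x k := by
          intro i'; simp [Matrix.mulVec, dotProduct]
        have hupper : ∑ k, (A i k - m k) * x k ≤ (1 - ∑ k, m k) * M := by
          have : ∑ k, (A i k - m k) * x k ≤ ∑ k, (A i k - m k) * M := by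
            apply Finset.sum_le_sum
            intro k _
            exact mul_le_mul_of_nonneg_left (hxM k) (by simp [hm, sub_nonneg, min_le_left])
          calc ∑ k, (A i k - m k) * x k ≤ ∑ k, (A i k - m k) * M := this
            _ = (∑ k, (A i k - m k)) * M := by rw [← Finset.sum_mul]
            _ = (1 - ∑ k, m k) * M := by
                rw [Finset.sum_sub_distrib, hsum i]
        have hlower : (1 - ∑ k, m k) * mn ≤ ∑ k, (A j k - m k) * x k := by
          have : ∑ k, (A j k - m k) * mn ≤ ∑ k, (A j k - m k) * x k := by
            apply Finset.sum_le_sum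
            intro k _
            exact mul_le_mul_of_nonneg_left (hmx k) (by simp [hm, sub_nonneg, min_le_right])
          calc (1 - ∑ k, m k) * mn = (∑ k, (A j k - m k)) * mn := by
                rw [Finset.sum_sub_distrib, hsum j]
            _ = ∑ k, (A j k - m k) * mn := by rw [Finset.sum_mul]
            _ ≤ _ := this
        have hdiff : A.mulVec x i - A.mulVec x j
            = ∑ k, (A i k - m k) * x k - ∑ k, (A j k - m k) * x k := by
          rw [hmv i, hmv j]
          simp only [sub_mul, Finset.sum_sub_distrib]
          ring
        have step : A.mulVec x i - A.mulVec x j ≤ (1 - ∑ k, m k) * disc x := by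
          rw [hdiff]
          have : (1 - ∑ k, m k) * disc x = (1 - ∑ k, m k) * M - (1 - ∑ k, m k) * mn := by
            simp only [disc, ← hM, ← hmn]; ring
          linarith
        calc A.mulVec x i - A.mulVec x j ≤ (1 - ∑ k, m k) * disc x := step
          _ ≤ ergodicCoeff A * disc x := mul_le_mul_of_nonneg_right hSle hdisc
    -- conclude
    obtain ⟨j0, hj0⟩ := Finite.exists_min (A.mulVec x)
    have hinf : (⨅ i, A.mulVec x i) = A.mulVec x j0 :=
      le_antisymm (ciInf_le (Set.Finite.bddBelow (Set.finite_range _)) j0) (le_ciInf hj0)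
    simp only [disc, hinf]
    rw [sub_le_iff_le_add]
    apply ciSup_le
    intro i
    have := key i j0
    simp only [disc] at this
    linarith
end

section
/- For any row-stochastic matrix A ∈ R^{N×N}, the ergodic coefficient equals the supremum of Δ(Ax) over all vectors x with Δ(x) = 1, i.e., λ(A) = sup_{Δ(x)=1} Δ(Ax). -/
lemma disc_indicator {N : ℕ} [Nonempty (Fin N)] (x : Fin N → ℝ)
    (h01 : ∀ k, x k = 0 ∨ x k = 1) (h1 : ∃ k, x k = 1) (h0 : ∃ k, x k = 0) :
    disc x = 1 := by
  have hbA : BddAbove (Set.range x) := (Set.finite_range x).bddAbove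
  have hbB : BddBelow (Set.range x) := (Set.finite_range x).bddBelow
  obtain ⟨k1, hk1⟩ := h1
  obtain ⟨k0, hk0⟩ := h0
  have hsup : (⨆ i, x i) = 1 :=
    le_antisymm (ciSup_le fun k => by rcases h01 k with h | h <;> simp [h])
      (hk1 ▸ le_ciSup hbA k1)
  have hinf : (⨅ i, x i) = 0 :=
    le_antisymm (hk0 ▸ ciInf_le hbB k0)
      (le_ciInf fun k => by rcases h01 k with h | h <;> simp [h])
  simp [disc, hsup, hinf]

/-- The ergodic coefficient equals the supremum of `Δ(Ax)` over `Δ(x) = 1`. -/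
theorem ergodicCoeff_eq_sSup {N : ℕ} (hN : 2 ≤ N) (A : Matrix (Fin N) (Fin N) ℝ)
    (hA : RowStochastic A) :
    ergodicCoeff A = sSup {d : ℝ | ∃ x : Fin N → ℝ, disc x = 1 ∧ d = disc (A.mulVec x)} := by
  obtain ⟨hpos, hsum⟩ := hA
  have hNpos : 0 < N := by omega
  haveI : Nonempty (Fin N) := ⟨⟨0, hNpos⟩⟩
  haveI hPne : Nonempty {p : Fin N × Fin N // p.1 ≠ p.2} :=
    ⟨⟨(⟨0, by omega⟩, ⟨1, by omega⟩), by simp [Fin.ext_iff]⟩⟩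
  set g : {p : Fin N × Fin N // p.1 ≠ p.2} → ℝ :=
    fun p => ∑ k, min (A p.1.1 k) (A p.1.2 k) with hg
  obtain ⟨p₀, hp₀⟩ := Finite.exists_min g
  have hinf : (⨅ p, g p) = g p₀ :=
    le_antisymm (ciInf_le ((Set.finite_range g).bddBelow) p₀) (le_ciInf hp₀)
  have hsle : ∀ i j : Fin N, ∑ k, min (A i k) (A j k) ≤ 1 := by
    intro i j
    calc ∑ k, min (A i k) (A j k) ≤ ∑ k, A i k :=
          Finset.sum_le_sum (fun k _ => min_le_left _ _)
      _ = 1 := hsum i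
  have hec : ergodicCoeff A = 1 - g p₀ := by rw [ergodicCoeff, ← hg, hinf]
  have hecnn : 0 ≤ ergodicCoeff A := by
    have := hsle p₀.1.1 p₀.1.2
    rw [hec]; simp only [hg]; linarith
  -- key pointwise bound
  have key : ∀ (i j : Fin N) (x : Fin N → ℝ), disc x = 1 →
      A.mulVec x i - A.mulVec x j ≤ 1 - ∑ k, min (A i k) (A j k) := by
    intro i j x hx
    simp only [disc] at hx
    set M := ⨆ l, x l with hMdef
    set m := ⨅ l, x l with hmdef
    have hbA : BddAbove (Set.range x) := (Set.finite_range x).bddAbove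
    have hbB : BddBelow (Set.range x) := (Set.finite_range x).bddBelow
    have hM : ∀ k, x k ≤ M := fun k => le_ciSup hbA k
    have hm : ∀ k, m ≤ x k := fun k => ciInf_le hbB k
    set s := ∑ k, min (A i k) (A j k) with hs
    have e1 : ∑ k, (A i k - min (A i k) (A j k)) * x k ≤ (1 - s) * M := by
      calc ∑ k, (A i k - min (A i k) (A j k)) * x k
          ≤ ∑ k, (A i k - min (A i k) (A j k)) * M :=
            Finset.sum_le_sum fun k _ =>
              mul_le_mul_of_nonneg_left (hM k) (by simp [min_le_left])
        _ = (1 - s) * M := by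
            rw [← Finset.sum_mul, Finset.sum_sub_distrib, hsum i, hs]
    have e2 : (1 - s) * m ≤ ∑ k, (A j k - min (A i k) (A j k)) * x k := by
      calc (1 - s) * m
          = ∑ k, (A j k - min (A i k) (A j k)) * m := by
            rw [← Finset.sum_mul, Finset.sum_sub_distrib, hsum j, hs]
        _ ≤ ∑ k, (A j k - min (A i k) (A j k)) * x k :=
            Finset.sum_le_sum fun k _ =>
              mul_le_mul_of_nonneg_left (hm k) (by simp [min_le_right])
    have e0 : A.mulVec x i - A.mulVec x j =
        (∑ k, (A i k - min (A i k) (A j k)) * x k) -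
        (∑ k, (A j k - min (A i k) (A j k)) * x k) := by
      show (∑ k, A i k * x k) - (∑ k, A j k * x k) = _
      rw [← Finset.sum_sub_distrib, ← Finset.sum_sub_distrib]
      apply Finset.sum_congr rfl
      intro k _; ring
    have e3 : (1 - s) * M - (1 - s) * m = 1 - s := by
      rw [← mul_sub, hx, mul_one]
    linarith
  -- upper bound
  have bound : ∀ x : Fin N → ℝ, disc x = 1 → disc (A.mulVec x) ≤ ergodicCoeff A := by
    intro x hx
    obtain ⟨imax, himax⟩ := Finite.exists_max (A.mulVec x)
    obtain ⟨jmin, hjmin⟩ := Finite.exists_min (A.mulVec x)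
    have h1 : disc (A.mulVec x) ≤ A.mulVec x imax - A.mulVec x jmin := by
      have hu : (⨆ i, A.mulVec x i) ≤ A.mulVec x imax := ciSup_le himax
      have hl : A.mulVec x jmin ≤ ⨅ i, A.mulVec x i := le_ciInf hjmin
      simp only [disc]; linarith
    by_cases hij : imax = jmin
    · have : disc (A.mulVec x) ≤ 0 := by rw [hij] at h1; linarith
      linarith
    · have h2 := key imax jmin x hx
      have h3 : g p₀ ≤ ∑ k, min (A imax k) (A jmin k) := hp₀ ⟨(imax, jmin), hij⟩
      rw [hec]
      linarith
  -- the witness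
  set i := p₀.1.1 with hi
  set j := p₀.1.2 with hj
  have hmem : ∃ x : Fin N → ℝ, disc x = 1 ∧ ergodicCoeff A = disc (A.mulVec x) := by
    by_cases hc : ∀ k, A i k ≤ A j k
    · -- rows equal, ergodicCoeff = 0
      have hrows : ∀ k, A i k = A j k := by
        have hz : ∑ k, (A j k - A i k) = 0 := by
          rw [Finset.sum_sub_distrib, hsum i, hsum j]; ring
        intro k
        have := (Finset.sum_eq_zero_iff_of_nonneg
          (fun k _ => by linarith [hc k])).mp hz k (Finset.mem_univ k)
        linarith
      have hec0 : ergodicCoeff A = 0 := by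
        rw [hec]
        have : g p₀ = 1 := by
          simp only [hg]
          calc ∑ k, min (A p₀.1.1 k) (A p₀.1.2 k) = ∑ k, A i k := by
                apply Finset.sum_congr rfl
                intro k _
                rw [← hi, ← hj, min_eq_left (hc k)]
            _ = 1 := hsum i
        rw [this]; ring
      refine ⟨fun k => if k = ⟨0, hNpos⟩ then 1 else 0, ?_, ?_⟩
      · apply disc_indicator
        · intro k; by_cases h : k = ⟨0, hNpos⟩ <;> simp [h]
        · exact ⟨⟨0, hNpos⟩, by simp⟩
        · exact ⟨⟨1, by omega⟩, by simp [Fin.ext_iff]⟩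
      · set x : Fin N → ℝ := fun k => if k = ⟨0, hNpos⟩ then 1 else 0 with hxdef
        have hx1 : disc x = 1 := by
          apply disc_indicator
          · intro k; by_cases h : k = ⟨0, hNpos⟩ <;> simp [hxdef, h]
          · exact ⟨⟨0, hNpos⟩, by simp [hxdef]⟩
          · exact ⟨⟨1, by omega⟩, by simp [hxdef, Fin.ext_iff]⟩
        have hub := bound x hx1
        have hlb : 0 ≤ disc (A.mulVec x) := by
          obtain ⟨k⟩ := (inferInstance : Nonempty (Fin N))
          have h1 : A.mulVec x k ≤ ⨆ l, A.mulVec x l :=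
            le_ciSup ((Set.finite_range _).bddAbove) k
          have h2 : (⨅ l, A.mulVec x l) ≤ A.mulVec x k :=
            ciInf_le ((Set.finite_range _).bddBelow) k
          simp only [disc]; linarith
        rw [hec0]; rw [hec0] at hub; linarith
    · push_neg at hc
      obtain ⟨k₀, hk₀⟩ := hc
      set x : Fin N → ℝ := fun k => if A j k < A i k then 1 else 0 with hxdef
      have hnotall : ∃ k, ¬ A j k < A i k := by
        by_contra h
        push_neg at h
        have : ∑ k, A j k < ∑ k, A i k :=
          Finset.sum_lt_sum_of_nonempty Finset.univ_nonempty (fun k _ => h k)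
        rw [hsum i, hsum j] at this
        exact lt_irrefl _ this
      obtain ⟨k₁, hk₁⟩ := hnotall
      have hx1 : disc x = 1 := by
        apply disc_indicator
        · intro k; by_cases h : A j k < A i k <;> simp [hxdef, h]
        · exact ⟨k₀, by simp [hxdef, hk₀]⟩
        · exact ⟨k₁, by simp [hxdef, hk₁]⟩
      have hdiff : A.mulVec x i - A.mulVec x j = ergodicCoeff A := by
        have e0 : A.mulVec x i - A.mulVec x j =
            ∑ k, (A i k - min (A i k) (A j k)) := by
          show (∑ k, A i k * x k) - (∑ k, A j k * x k) = _
          rw [← Finset.sum_sub_distrib]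
          apply Finset.sum_congr rfl
          intro k _
          by_cases h : A j k < A i k
          · simp [hxdef, h, min_eq_right (le_of_lt h)]
          · push_neg at h
            simp [hxdef, not_lt.mpr h, min_eq_left h]
        rw [e0, Finset.sum_sub_distrib, hsum i, hec]
      have hub := bound x hx1
      have hlb : ergodicCoeff A ≤ disc (A.mulVec x) := by
        have h1 : A.mulVec x i ≤ ⨆ l, A.mulVec x l :=
          le_ciSup ((Set.finite_range _).bddAbove) i
        have h2 : (⨅ l, A.mulVec x l) ≤ A.mulVec x j :=
          ciInf_le ((Set.finite_range _).bddBelow) j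
        simp only [disc]; linarith
      exact ⟨x, hx1, le_antisymm hlb hub⟩
  -- conclude
  obtain ⟨x₀, hx₀, hd₀⟩ := hmem
  have hmemS : ergodicCoeff A ∈
      {d : ℝ | ∃ x : Fin N → ℝ, disc x = 1 ∧ d = disc (A.mulVec x)} := ⟨x₀, hx₀, hd₀⟩
  have hubS : ∀ d ∈ {d : ℝ | ∃ x : Fin N → ℝ, disc x = 1 ∧ d = disc (A.mulVec x)},
      d ≤ ergodicCoeff A := by
    rintro d ⟨x, hx, rfl⟩
    exact bound x hx
  exact le_antisymm (le_csSup ⟨ergodicCoeff A, hubS⟩ hmemS) (csSup_le ⟨_, hmemS⟩ hubS)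
end

section
/- Let {P_k}_{k≥1} be column-stochastic l×l matrices with P_k ≥ W entrywise and P_k having the same zero pattern as W for all k, where W is a nonnegative matrix such that the directed graph of W^T is rooted with node 1 as the unique root and node 1 has a self-loop (W_{11} > 0). Then there exist c_0 > 0 and β ∈ (0,1) such that ‖P_k ⋯ P_2 P_1 − e_1 𝟙^T‖ ≤ c_0 β^k for all k ≥ 1. -/
/-- The backward product `P_k ⋯ P_2 P_1`. -/
noncomputable def matProd {l : ℕ} (P : ℕ → Matrix (Fin l) (Fin l) ℝ) :
    ℕ → Matrix (Fin l) (Fin l) ℝ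
  | 0 => 1
  | k + 1 => P (k + 1) * matProd P k

/-- The shifted backward product `P_{k+m} ⋯ P_{k+2} P_{k+1}`. -/
noncomputable def Bprod {l : ℕ} (P : ℕ → Matrix (Fin l) (Fin l) ℝ) (k : ℕ) :
    ℕ → Matrix (Fin l) (Fin l) ℝ
  | 0 => 1
  | m + 1 => P (k + m + 1) * Bprod P k m

/-- Products of column-stochastic matrices dominating a fixed pattern `W` whose graph
`G(Wᵀ)` is rooted with unique root 1 having a self-loop converge exponentially to
`e₁𝟙ᵀ`. -/
theorem matProd_tendsto_e1 {l : ℕ} (hl : 0 < l) (W : Matrix (Fin l) (Fin l) ℝ)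
    (P : ℕ → Matrix (Fin l) (Fin l) ℝ)
    (hW0 : ∀ i j, 0 ≤ W i j)
    (hcolPos : ∀ k i j, 0 ≤ P k i j)
    (hcol : ∀ k j, ∑ i, P k i j = 1)
    (hge : ∀ k i j, W i j ≤ P k i j)
    (hsign : ∀ k i j, 0 < P k i j ↔ 0 < W i j)
    (hroot : ∀ j : Fin l, Relation.ReflTransGen (fun a b => 0 < W a b) ⟨0, hl⟩ j)
    (huniq : ∀ r : Fin l, (∀ j, Relation.ReflTransGen (fun a b => 0 < W a b) r j) → r = ⟨0, hl⟩)
    (hself : 0 < W ⟨0, hl⟩ ⟨0, hl⟩) :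
    ∃ c₀ > (0:ℝ), ∃ β ∈ Set.Ioo (0:ℝ) 1, ∀ k ≥ 1, ∀ i j,
      |matProd P k i j - (if i = (⟨0, hl⟩ : Fin l) then 1 else 0)| ≤ c₀ * β ^ k := by
  set r : Fin l := ⟨0, hl⟩ with hrdef
  -- node `r` is absorbing
  have hPr : ∀ k i, P k i r = if i = r then 1 else 0 := by
    intro k i
    have hzero : ∀ i, i ≠ r → P k i r = 0 := by
      intro i hi
      by_contra h
      have hpos : 0 < P k i r := lt_of_le_of_ne (hcolPos k i r) (Ne.symm h)
      have hWpos : 0 < W i r := (hsign k i r).mp hpos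
      exact hi (huniq i (fun j => Relation.ReflTransGen.head hWpos (hroot j)))
    by_cases h : i = r
    · subst h
      have hsum := hcol k r
      rw [Fintype.sum_eq_single r hzero] at hsum
      simp [hsum]
    · simp [h, hzero i h]
  -- basic properties of Bprod
  have hB0 : ∀ k m i j, 0 ≤ Bprod P k m i j := by
    intro k m
    induction m with
    | zero =>
      intro i j
      by_cases h : i = j <;> simp [Bprod, Matrix.one_apply, h]
    | succ m ih =>
      intro i j
      show 0 ≤ (P (k + m + 1) * Bprod P k m) i j
      rw [Matrix.mul_apply]
      exact Finset.sum_nonneg fun t _ => mul_nonneg (hcolPos _ _ _) (ih t j)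
  have hBcol : ∀ k m j, ∑ i, Bprod P k m i j = 1 := by
    intro k m
    induction m with
    | zero => intro j; simp [Bprod, Matrix.one_apply]
    | succ m ih =>
      intro j
      show ∑ i, (P (k + m + 1) * Bprod P k m) i j = 1
      simp only [Matrix.mul_apply]
      rw [Finset.sum_comm]
      simp_rw [← Finset.sum_mul, hcol, one_mul]
      exact ih j
  have hBle1 : ∀ k m i j, Bprod P k m i j ≤ 1 := by
    intro k m i j
    have h : Bprod P k m i j ≤ ∑ t, Bprod P k m t j :=
      Finset.single_le_sum (f := fun t => Bprod P k m t j)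
        (fun t _ => hB0 k m t j) (Finset.mem_univ i)
    rw [hBcol k m j] at h
    exact h
  have hBr : ∀ k m i, Bprod P k m i r = if i = r then 1 else 0 := by
    intro k m
    induction m with
    | zero => intro i; simp [Bprod, Matrix.one_apply]
    | succ m ih =>
      intro i
      show (P (k + m + 1) * Bprod P k m) i r = _
      rw [Matrix.mul_apply]
      calc ∑ t, P (k + m + 1) i t * Bprod P k m t r
          = ∑ t, P (k + m + 1) i t * (if t = r then 1 else 0) := by
            exact Finset.sum_congr rfl fun t _ => by rw [ih t]
        _ = P (k + m + 1) i r := by simp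
        _ = if i = r then 1 else 0 := hPr _ i
  have hsplit : ∀ m k, Bprod P k (m + 1) = Bprod P (k + 1) m * P (k + 1) := by
    intro m
    induction m with
    | zero => intro k; show P (k + 0 + 1) * 1 = 1 * P (k + 1); simp
    | succ m ih =>
      intro k
      show P (k + (m + 1) + 1) * Bprod P k (m + 1) = (P (k + 1 + m + 1) * Bprod P (k + 1) m) * P (k + 1)
      have hidx : k + (m + 1) + 1 = k + 1 + m + 1 := by omega
      rw [ih k, ← Matrix.mul_assoc, hidx]
  have hcompose : ∀ m k, Bprod P 0 (k + m) = Bprod P k m * Bprod P 0 k := by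
    intro m
    induction m with
    | zero => intro k; show Bprod P 0 k = 1 * Bprod P 0 k; rw [Matrix.one_mul]
    | succ m ih =>
      intro k
      show P (0 + (k + m) + 1) * Bprod P 0 (k + m)
          = (P (k + m + 1) * Bprod P k m) * Bprod P 0 k
      have hidx : 0 + (k + m) + 1 = k + m + 1 := by omega
      rw [hidx, ih k, ← Matrix.mul_assoc]
  have hmat : ∀ m, matProd P m = Bprod P 0 m := by
    intro m
    induction m with
    | zero => rfl
    | succ m ih =>
      show P (m + 1) * matProd P m = P (0 + m + 1) * Bprod P 0 m
      rw [ih, Nat.zero_add]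
  -- the minimum positive entry bound
  set S : Finset (Fin l × Fin l) := Finset.univ.filter (fun p => 0 < W p.1 p.2) with hS
  have hSne : S.Nonempty := ⟨(r, r), by simp [hS, hself]⟩
  set ε : ℝ := min (1/2) (S.inf' hSne fun p => W p.1 p.2) with hε
  have hε0 : 0 < ε := by
    apply lt_min (by norm_num)
    rw [Finset.lt_inf'_iff]
    intro p hp
    rw [hS, Finset.mem_filter] at hp
    exact hp.2
  have hεhalf : ε ≤ 1/2 := min_le_left _ _
  have hεle1 : ε ≤ 1 := hεhalf.trans (by norm_num)
  have hεW : ∀ i j, 0 < W i j → ε ≤ W i j := by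
    intro i j h
    exact le_trans (min_le_right _ _)
      (Finset.inf'_le (fun p => W p.1 p.2) (show (i, j) ∈ S by simp [hS, h]))
  -- monotonicity of the (r, j) entry in the length
  have hstep1 : ∀ k n j, Bprod P k n r j ≤ Bprod P k (n + 1) r j := by
    intro k n j
    have h : P (k + n + 1) r r * Bprod P k n r j
        ≤ ∑ t, P (k + n + 1) r t * Bprod P k n t j :=
      Finset.single_le_sum (f := fun t => P (k + n + 1) r t * Bprod P k n t j)
        (fun t _ => mul_nonneg (hcolPos _ _ _) (hB0 _ _ _ _)) (Finset.mem_univ r)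
    rw [hPr, if_pos rfl, one_mul] at h
    show Bprod P k n r j ≤ (P (k + n + 1) * Bprod P k n) r j
    rw [Matrix.mul_apply]
    exact h
  have hmono : ∀ k j a b, a ≤ b → Bprod P k a r j ≤ Bprod P k b r j := by
    intro k j a b hab
    induction b, hab using Nat.le_induction with
    | base => exact le_refl _
    | succ n hn ih => exact ih.trans (hstep1 k n j)
  -- reachability: each j gets mass at least ε^d at row r after some d steps
  have hreach : ∀ j, ∃ d, ∀ k, ε ^ d ≤ Bprod P k d r j := by
    intro j
    induction hroot j with
    | refl => exact ⟨0, fun k => by simp [Bprod, Matrix.one_apply]⟩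
    | @tail b c hab hbc ih =>
      obtain ⟨d, hd⟩ := ih
      refine ⟨d + 1, fun k => ?_⟩
      rw [hsplit d k, Matrix.mul_apply]
      have h1 : ε ^ d * ε ≤ Bprod P (k + 1) d r b * P (k + 1) b c :=
        mul_le_mul (hd (k + 1)) (le_trans (hεW b c hbc) (hge (k + 1) b c)) hε0.le
          (hB0 _ _ _ _)
      calc ε ^ (d + 1) = ε ^ d * ε := pow_succ ε d
        _ ≤ Bprod P (k + 1) d r b * P (k + 1) b c := h1
        _ ≤ ∑ t, Bprod P (k + 1) d r t * P (k + 1) t c :=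
            Finset.single_le_sum
              (f := fun t => Bprod P (k + 1) d r t * P (k + 1) t c)
              (fun t _ => mul_nonneg (hB0 _ _ _ _) (hcolPos _ _ _))
              (Finset.mem_univ b)
  choose d hd using hreach
  set m : ℕ := (Finset.univ.sup d) + 1 with hmdef
  have hm1 : 1 ≤ m := Nat.le_add_left 1 _
  have hdm : ∀ j, d j ≤ m := fun j =>
    Nat.le_succ_of_le (Finset.le_sup (Finset.mem_univ j))
  have hwin : ∀ k j, ε ^ m ≤ Bprod P k m r j := by
    intro k j
    calc ε ^ m ≤ ε ^ (d j) := pow_le_pow_of_le_one hε0.le hεle1 (hdm j)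
      _ ≤ Bprod P k (d j) r j := hd j k
      _ ≤ Bprod P k m r j := hmono k j _ _ (hdm j)
  set q : ℝ := 1 - ε ^ m with hqdef
  have hεm1 : ε ^ m ≤ 1/2 := by
    calc ε ^ m ≤ ε ^ 1 := pow_le_pow_of_le_one hε0.le hεle1 hm1
      _ = ε := pow_one ε
      _ ≤ 1/2 := hεhalf
  have hq0 : 0 < q := by rw [hqdef]; linarith
  have hq1 : q < 1 := by
    have := pow_pos hε0 m
    rw [hqdef]; linarith
  -- contraction over a window of length m
  have hcontr : ∀ k j, 1 - Bprod P 0 (k + m) r j ≤ q * (1 - Bprod P 0 k r j) := by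
    intro k j
    rw [hcompose m k, Matrix.mul_apply]
    have e1 : ∑ t, (1 - Bprod P k m r t) * Bprod P 0 k t j
        = 1 - ∑ t, Bprod P k m r t * Bprod P 0 k t j := by
      simp only [sub_mul, one_mul]
      rw [Finset.sum_sub_distrib, hBcol 0 k j]
    have e2 : ∑ t, (1 - Bprod P k m r t) * Bprod P 0 k t j
        ≤ ∑ t, q * (if t = r then 0 else Bprod P 0 k t j) := by
      apply Finset.sum_le_sum
      intro t _
      by_cases h : t = r
      · subst h; rw [hBr k m r, if_pos rfl, if_pos rfl]; simp
      · rw [if_neg h]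
        apply mul_le_mul_of_nonneg_right _ (hB0 _ _ _ _)
        have := hwin k t
        rw [hqdef]; linarith
    have e3 : ∑ t, q * (if t = r then 0 else Bprod P 0 k t j)
        = q * (1 - Bprod P 0 k r j) := by
      rw [← Finset.mul_sum]
      congr 1
      have h4 : ∀ t : Fin l, (if t = r then (0:ℝ) else Bprod P 0 k t j)
          = Bprod P 0 k t j - (if t = r then Bprod P 0 k t j else 0) := by
        intro t; by_cases h : t = r <;> simp [h]
      simp_rw [h4]
      rw [Finset.sum_sub_distrib, hBcol 0 k j,
        Finset.sum_ite_eq' Finset.univ r (fun t => Bprod P 0 k t j)]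
      simp
    linarith [e2.trans (le_of_eq e3)]
  -- geometric decay
  have hgeom : ∀ k j, 1 - Bprod P 0 k r j ≤ q ^ (k / m) := by
    intro k
    induction k using Nat.strong_induction_on with
    | _ k ih =>
      intro j
      by_cases hk : k < m
      · rw [Nat.div_eq_of_lt hk, pow_zero]
        linarith [hB0 0 k r j]
      · push_neg at hk
        obtain ⟨k', rfl⟩ : ∃ k', k = k' + m := ⟨k - m, (Nat.sub_add_cancel hk).symm⟩
        have h1 := hcontr k' j
        have h2 := ih k' (by omega) j
        have h3 : (k' + m) / m = k' / m + 1 := Nat.add_div_right k' (by omega)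
        rw [h3, pow_succ]
        calc 1 - Bprod P 0 (k' + m) r j ≤ q * (1 - Bprod P 0 k' r j) := h1
          _ ≤ q * q ^ (k' / m) := mul_le_mul_of_nonneg_left h2 hq0.le
          _ = q ^ (k' / m) * q := mul_comm _ _
  -- define β and conclude
  set β : ℝ := q ^ ((m:ℝ)⁻¹) with hβdef
  have hβ0 : 0 < β := Real.rpow_pos_of_pos hq0 _
  have hβ1 : β < 1 := Real.rpow_lt_one hq0.le hq1 (by positivity)
  have hmne : (m:ℝ) ≠ 0 := Nat.cast_ne_zero.mpr (by omega)
  have hβm : β ^ m = q := by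
    rw [hβdef, ← Real.rpow_natCast (q ^ ((m:ℝ)⁻¹)) m, ← Real.rpow_mul hq0.le,
      inv_mul_cancel₀ hmne, Real.rpow_one]
  have hβinv : (1:ℝ) ≤ β⁻¹ := by
    rw [le_inv_comm₀ (by norm_num) hβ0]
    simpa using hβ1.le
  refine ⟨β⁻¹ ^ m, by positivity, β, ⟨hβ0, hβ1⟩, ?_⟩
  intro k _ i j
  rw [hmat k]
  have hent : |Bprod P 0 k i j - (if i = r then 1 else 0)| ≤ 1 - Bprod P 0 k r j := by
    by_cases h : i = r
    · subst h
      rw [if_pos rfl, abs_sub_comm, abs_of_nonneg (by linarith [hBle1 0 k r j])]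
    · rw [if_neg h, sub_zero, abs_of_nonneg (hB0 0 k i j)]
      have h2 : ∑ t ∈ ({r, i} : Finset (Fin l)), Bprod P 0 k t j
          ≤ ∑ t, Bprod P 0 k t j :=
        Finset.sum_le_sum_of_subset_of_nonneg (Finset.subset_univ _)
          (fun t _ _ => hB0 0 k t j)
      rw [Finset.sum_pair (Ne.symm h), hBcol 0 k j] at h2
      linarith
  have hfin : q ^ (k / m) ≤ β⁻¹ ^ m * β ^ k := by
    have e : q ^ (k / m) * β ^ (k % m) = β ^ k := by
      rw [← hβm, ← pow_mul, ← pow_add]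
      congr 1
      exact Nat.div_add_mod k m
    have hmod : (β⁻¹) ^ (k % m) ≤ (β⁻¹) ^ m :=
      pow_le_pow_right₀ hβinv (le_of_lt (Nat.mod_lt k (by omega)))
    have hne : β ^ (k % m) ≠ 0 := pow_ne_zero _ hβ0.ne'
    have e2 : q ^ (k / m) = β ^ k * (β⁻¹) ^ (k % m) := by
      rw [inv_pow, eq_mul_inv_iff_mul_eq₀ hne]
      exact e
    calc q ^ (k / m) = β ^ k * (β⁻¹) ^ (k % m) := e2
      _ ≤ β ^ k * (β⁻¹) ^ m :=
          mul_le_mul_of_nonneg_left hmod (pow_nonneg hβ0.le k)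
      _ = β⁻¹ ^ m * β ^ k := mul_comm _ _
  calc |Bprod P 0 k i j - (if i = r then 1 else 0)| ≤ 1 - Bprod P 0 k r j := hent
    _ ≤ q ^ (k / m) := hgeom k j
    _ ≤ β⁻¹ ^ m * β ^ k := hfin
end

section
/- Let A be the 5×5 row-stochastic matrix with rows: row 1 = e_5, row 2 = e_1, row 3 = (0.5, 0.5, 0, 0, 0), row 4 = e_3, row 5 = e_4. Then A is SIA, but the product A_3 A_2 A_1 A_4 A_5 of asynchronous iteration matrices equals a matrix that is not SIA (its graph is disconnected from being rooted-and-aperiodic; indeed the product matrix has rows 1,2,3,5 equal to e_4 and row 4 equal to e_3, forming a 2-cycle between nodes 3 and 4 in the limit). -/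
/-!
The matrix `A` has stationary distribution `π = (2, 1, 2, 2, 2) / 9`, and `P = 𝟙 πᵀ` satisfies
`A P = P A = P² = P`. Hence `A ^ (n + 1) - P = (A - P) ^ (n + 1)`, and since `A⁹` lies within
`8 / 9 < 1` of `P` in the max-row-sum norm, the powers of `A` converge to `P`.
The asynchronous product `B` satisfies `B³ = B ≠ B²`, so its powers alternate between `B` and `B²`.
-/

open Filter

/-- The asynchronous iteration matrix: row `σ` comes from `A`, others from identity. -/
def asyncM {N : ℕ} (A : Matrix (Fin N) (Fin N) ℝ) (σ : Fin N) : Matrix (Fin N) (Fin N) ℝ :=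
  Matrix.of fun i j => if i = σ then A i j else if i = j then 1 else 0

open Topology Matrix

section PowerConvergence

variable {R : Type*}

theorem tendsto_pow_atTop_nhds_zero_of_norm_pow_lt_one [SeminormedRing R] {x : R} {m : ℕ}
    (hm : 0 < m) (h : ‖x ^ m‖ < 1) : Tendsto (fun n ↦ x ^ n) atTop (𝓝 0) := by
  set C := ∑ r ∈ Finset.range m, ‖x ^ r‖
  have hq : Tendsto (fun n ↦ ‖(x ^ m) ^ (n / m)‖ * C) atTop (𝓝 0) := by
    simpa using ((tendsto_pow_atTop_nhds_zero_of_norm_lt_one h).norm.comp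
      (Nat.tendsto_div_const_atTop hm.ne')).mul_const C
  refine squeeze_zero_norm (fun n ↦ ?_) hq
  calc ‖x ^ n‖ = ‖(x ^ m) ^ (n / m) * x ^ (n % m)‖ := by
        rw [← pow_mul, ← pow_add, Nat.div_add_mod]
    _ ≤ ‖(x ^ m) ^ (n / m)‖ * ‖x ^ (n % m)‖ := norm_mul_le _ _
    _ ≤ ‖(x ^ m) ^ (n / m)‖ * C := by
        gcongr
        exact Finset.single_le_sum (fun r _ ↦ norm_nonneg (x ^ r))
          (Finset.mem_range.2 (Nat.mod_lt n hm))

theorem sub_pow_succ_of_mul_eq [Ring R] {A P : R} (hPP : P * P = P) (hAP : A * P = P)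
    (hPA : P * A = P) (n : ℕ) : (A - P) ^ (n + 1) = A ^ (n + 1) - P := by
  have hpow (k : ℕ) : A ^ k * P = P := by
    induction k with
    | zero => rw [pow_zero, one_mul]
    | succ k ih => rw [pow_succ', mul_assoc, ih, hAP]
  induction n with
  | zero => simp
  | succ n ih =>
    rw [pow_succ, ih, pow_succ A (n + 1)]
    simp only [sub_mul, mul_sub, hpow, hPA, hPP]
    abel

theorem tendsto_pow_of_norm_pow_sub_lt_one [SeminormedRing R] {A P : R} (hPP : P * P = P)
    (hAP : A * P = P) (hPA : P * A = P) {m : ℕ} (hm : 0 < m) (h : ‖A ^ m - P‖ < 1) :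
    Tendsto (fun n ↦ A ^ n) atTop (𝓝 P) := by
  obtain ⟨k, rfl⟩ := Nat.exists_eq_add_of_lt hm
  rw [zero_add, ← sub_pow_succ_of_mul_eq hPP hAP hPA] at h
  have hE := (tendsto_pow_atTop_nhds_zero_of_norm_pow_lt_one k.succ_pos h).comp
    (tendsto_add_atTop_nat 1)
  rw [← tendsto_add_atTop_iff_nat 1]
  simpa [Function.comp_def, sub_pow_succ_of_mul_eq hPP hAP hPA] using hE.const_add P

theorem not_tendsto_pow_of_pow_three_eq_self [Monoid R] [TopologicalSpace R] [T2Space R]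
    {x : R} (h3 : x ^ 3 = x) (h2 : x ^ 2 ≠ x) (L : R) :
    ¬Tendsto (fun n ↦ x ^ n) atTop (𝓝 L) := by
  intro hL
  have hodd (k : ℕ) : x ^ (2 * k + 1) = x := by
    induction k with
    | zero => rw [mul_zero, zero_add, pow_one]
    | succ k ih => rw [show 2 * (k + 1) + 1 = 2 * k + 1 + 2 by ring, pow_add, ih, ← pow_succ', h3]
  have heven (k : ℕ) : x ^ (2 * k + 2) = x ^ 2 := by rw [pow_succ, hodd, sq]
  have hL_odd : L = x := tendsto_nhds_unique
    (hL.comp (tendsto_atTop_mono (fun k ↦ show k ≤ 2 * k + 1 by omega) tendsto_id))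
    (by simp [Function.comp_def, hodd])
  have hL_even : L = x ^ 2 := tendsto_nhds_unique
    (hL.comp (tendsto_atTop_mono (fun k ↦ show k ≤ 2 * k + 2 by omega) tendsto_id))
    (by simp [Function.comp_def, heven])
  exact h2 (hL_even.symm.trans hL_odd)

end PowerConvergence

namespace Matrix

section LinftyOpNorm

attribute [local instance] Matrix.linftyOpNormedAddCommGroup

theorem linfty_opNorm_lt_one_of_sum_abs_lt_one {m n : Type*} [Fintype m] [Fintype n]
    {M : Matrix m n ℝ} (h : ∀ i, ∑ j, |M i j| < 1) : ‖M‖ < 1 := by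
  rw [linfty_opNorm_def, ← NNReal.coe_one, NNReal.coe_lt_coe, Finset.sup_lt_iff one_pos]
  intro i _
  rw [← NNReal.coe_lt_coe]
  simpa using h i

end LinftyOpNorm

theorem mul_replicateRow_of_sum_eq_one {l m n : Type*} [Fintype m] {A : Matrix l m ℝ}
    (hA : ∀ i, ∑ j, A i j = 1) (v : n → ℝ) : A * replicateRow m v = replicateRow l v := by
  ext i j
  simp [mul_apply, ← Finset.sum_mul, hA]

variable {n : Type*} [Fintype n] [DecidableEq n]

theorem tendsto_pow_replicateRow {A : Matrix n n ℝ} {π : n → ℝ} (hA : ∀ i, ∑ j, A i j = 1)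
    (hπA : π ᵥ* A = π) (hπ : ∑ j, π j = 1) {m : ℕ} (hm : 0 < m)
    (h : ∀ i, ∑ j, |(A ^ m - replicateRow n π) i j| < 1) :
    Tendsto (fun k ↦ A ^ k) atTop (𝓝 (replicateRow n π)) := by
  let := @Matrix.linftyOpNormedRing n ℝ _ _ _
  have hPP : replicateRow n π * replicateRow n π = replicateRow n π :=
    mul_replicateRow_of_sum_eq_one (fun _ ↦ hπ) π
  have hPA : replicateRow n π * A = replicateRow n π := by rw [← replicateRow_vecMul, hπA]
  exact tendsto_pow_of_norm_pow_sub_lt_one hPP (mul_replicateRow_of_sum_eq_one hA π) hPA hm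
    (linfty_opNorm_lt_one_of_sum_abs_lt_one h)

end Matrix

theorem asyncM_mul {N : ℕ} (A M : Matrix (Fin N) (Fin N) ℝ) (σ : Fin N) :
    asyncM A σ * M = M.updateRow σ (A σ ᵥ* M) := by
  ext i j
  by_cases hi : i = σ
  · subst hi
    simp [asyncM, mul_apply, vecMul, dotProduct]
  · simp [asyncM, mul_apply, hi]

namespace AsyncCounterexample

noncomputable def A : Matrix (Fin 5) (Fin 5) ℝ :=
  !![0, 0, 0, 0, 1;
     1, 0, 0, 0, 0;
     1/2, 1/2, 0, 0, 0;
     0, 0, 1, 0, 0;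
     0, 0, 0, 1, 0]

noncomputable def π : Fin 5 → ℝ := ![2/9, 1/9, 2/9, 2/9, 2/9]

noncomputable def B : Matrix (Fin 5) (Fin 5) ℝ :=
  !![0, 0, 0, 1, 0;
     0, 0, 0, 1, 0;
     0, 0, 0, 1, 0;
     0, 0, 1, 0, 0;
     0, 0, 0, 1, 0]

theorem sum_A_row (i : Fin 5) : ∑ j, A i j = 1 := by
  fin_cases i <;> simp [A, Fin.sum_univ_five]
  norm_num

theorem π_vecMul_A : π ᵥ* A = π := by
  simp [A, π, vecMul_cons]
  norm_num

theorem sum_π : ∑ j, π j = 1 := by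
  simp [π, Fin.sum_univ_five]
  norm_num

theorem A_pow_nine : A ^ 9 =
    !![1/2, 1/4, 0, 0, 1/4;
       1/4, 1/4, 1/2, 0, 0;
       1/8, 1/8, 1/2, 1/4, 0;
       0, 0, 1/4, 1/2, 1/4;
       1/4, 0, 0, 1/4, 1/2] := by
  have h2 : A ^ 2 = !![0, 0, 0, 1, 0; 0, 0, 0, 0, 1; 1/2, 0, 0, 0, 1/2;
      1/2, 1/2, 0, 0, 0; 0, 0, 1, 0, 0] := by
    rw [sq]
    simp only [A, cons_mul, vecMul_cons, empty_mul, empty_vecMul]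
    norm_num
  have h4 : A ^ 4 = !![1/2, 1/2, 0, 0, 0; 0, 0, 1, 0, 0; 0, 0, 1/2, 1/2, 0;
      0, 0, 0, 1/2, 1/2; 1/2, 0, 0, 0, 1/2] := by
    rw [show A ^ 4 = (A ^ 2) ^ 2 by rw [← pow_mul], h2, sq]
    simp only [cons_mul, vecMul_cons, empty_mul, empty_vecMul]
    norm_num
  have h8 : A ^ 8 = !![1/4, 1/4, 1/2, 0, 0; 0, 0, 1/2, 1/2, 0; 0, 0, 1/4, 1/2, 1/4;
      1/4, 0, 0, 1/4, 1/2; 1/2, 1/4, 0, 0, 1/4] := by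
    rw [show A ^ 8 = (A ^ 4) ^ 2 by rw [← pow_mul], h4, sq]
    simp only [cons_mul, vecMul_cons, empty_mul, empty_vecMul]
    norm_num
  rw [pow_succ, h8]
  simp only [A, cons_mul, vecMul_cons, empty_mul, empty_vecMul]
  norm_num

-- `9` is the least exponent for which every row of `A ^ m` is `ℓ¹`-closer than `1` to `π`.
theorem sum_abs_A_pow_nine_sub_lt_one (i : Fin 5) :
    ∑ j, |(A ^ 9 - replicateRow (Fin 5) π) i j| < 1 := by
  rw [A_pow_nine]
  fin_cases i <;> simp [π, Fin.sum_univ_five] <;> norm_num [abs_of_nonneg, abs_of_nonpos]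

theorem tendsto_A_pow : Tendsto (fun k ↦ A ^ k) atTop (𝓝 (replicateRow (Fin 5) π)) :=
  tendsto_pow_replicateRow sum_A_row π_vecMul_A sum_π (by norm_num) sum_abs_A_pow_nine_sub_lt_one

theorem asyncM_product : asyncM A 2 * asyncM A 1 * asyncM A 0 * asyncM A 3 * asyncM A 4 = B := by
  rw [← mul_one (asyncM A 4)]
  simp only [mul_assoc]
  simp only [asyncM_mul]
  ext i j
  fin_cases i <;> fin_cases j <;>
    simp [A, B, updateRow_apply, vecMul, dotProduct, Fin.sum_univ_five, one_apply]
  norm_num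

theorem B_sq : B ^ 2 =
    !![0, 0, 1, 0, 0;
       0, 0, 1, 0, 0;
       0, 0, 1, 0, 0;
       0, 0, 0, 1, 0;
       0, 0, 1, 0, 0] := by
  rw [sq]
  simp only [B, cons_mul, vecMul_cons, empty_mul, empty_vecMul]
  norm_num

theorem B_pow_three : B ^ 3 = B := by
  rw [pow_succ, B_sq]
  simp only [B, cons_mul, vecMul_cons, empty_mul, empty_vecMul]
  norm_num

theorem B_sq_ne_self : B ^ 2 ≠ B := by
  intro h
  have h32 := congr_fun₂ h 3 2
  rw [B_sq] at h32
  simp [B] at h32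

end AsyncCounterexample

/-- The given `5×5` SIA matrix admits an asynchronous product `A₃A₂A₁A₄A₅` that is
not SIA. -/
theorem SIA_async_product_not_SIA :
    let A : Matrix (Fin 5) (Fin 5) ℝ :=
      !![0, 0, 0, 0, 1;
         1, 0, 0, 0, 0;
         1/2, 1/2, 0, 0, 0;
         0, 0, 1, 0, 0;
         0, 0, 0, 1, 0]
    let B : Matrix (Fin 5) (Fin 5) ℝ :=
      !![0, 0, 0, 1, 0;
         0, 0, 0, 1, 0;
         0, 0, 0, 1, 0;
         0, 0, 1, 0, 0;
         0, 0, 0, 1, 0]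
    (∃ ξ : Fin 5 → ℝ,
      Tendsto (fun k => A ^ k) atTop (nhds (Matrix.of fun _ j => ξ j))) ∧
    asyncM A 2 * asyncM A 1 * asyncM A 0 * asyncM A 3 * asyncM A 4 = B ∧
    ¬ ∃ ξ : Fin 5 → ℝ,
      Tendsto (fun k => B ^ k) atTop (nhds (Matrix.of fun _ j => ξ j)) := by
  intro A B
  refine ⟨⟨AsyncCounterexample.π, AsyncCounterexample.tendsto_A_pow⟩,
    AsyncCounterexample.asyncM_product, ?_⟩
  rintro ⟨ξ, hξ⟩
  exact not_tendsto_pow_of_pow_three_eq_self AsyncCounterexample.B_pow_three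
    AsyncCounterexample.B_sq_ne_self _ hξ
end
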